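/- If A is real skew-symmetric, b ∈ ℝⁿ, and x^E ∈ K_q(A², Ab), then the residual b - Ax^E lies in K_{q+1}(A², b), and hence is orthogonal to K_q(A², Ab). -/

import Mathlib

open Matrix

def krylov {n : ℕ} (M : Matrix (Fin n) (Fin n) ℝ) (v : Fin n → ℝ) (m : ℕ) :
    Submodule ℝ (Fin n → ℝ) :=
  Submodule.span ℝ ((fun k => (M ^ k) *ᵥ v) '' Set.Iio m)

noncomputable def enorm {n : ℕ} (v : Fin n → ℝ) : ℝ := Real.sqrt (∑ i, v i ^ 2)

/-! Multiplying by `A` maps `K_q(A², Ab)` into `K_{q+1}(A², b)`, so the residual `b - A xᴱ` lies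
there. For skew-symmetric `A`, `(Aⁱ b) ⬝ (Aʲ b) = (-1)ⁱ b ⬝ (Aⁱ⁺ʲ b)`, which vanishes when `i + j`
is odd because `Aⁱ⁺ʲ` is then skew-symmetric; the generators `A²ᵏ⁺¹ b` of the first space are
therefore orthogonal to the generators `A²ʲ b` of the second. -/

section SkewSymmetric

variable {ι R : Type*} [Fintype ι] [CommRing R] {A : Matrix ι ι R}

theorem dotProduct_mulVec_self_eq_zero [IsAddTorsionFree R] (hA : Aᵀ = -A) (v : ι → R) :
    v ⬝ᵥ (A *ᵥ v) = 0 := by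
  rw [← self_eq_neg]
  conv_lhs => rw [dotProduct_mulVec, ← mulVec_transpose, hA, neg_mulVec, neg_dotProduct,
    dotProduct_comm]

theorem pow_mulVec_dotProduct_pow_mulVec_eq_zero [DecidableEq ι] [IsAddTorsionFree R]
    (hA : Aᵀ = -A) {i j : ℕ} (hij : Odd (i + j)) (v : ι → R) :
    (A ^ i *ᵥ v) ⬝ᵥ (A ^ j *ᵥ v) = 0 := by
  have hpow : (A ^ (j + i))ᵀ = -A ^ (j + i) := by rw [transpose_pow, hA, add_comm, hij.neg_pow]
  rw [dotProduct_mulVec, ← mulVec_transpose, transpose_pow, hA, mulVec_mulVec, neg_pow,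
    mul_assoc, ← pow_add, dotProduct_comm]
  rcases neg_one_pow_eq_or (Matrix ι ι R) j with h | h <;>
    simp only [h, one_mul, neg_one_mul, neg_mulVec, dotProduct_neg,
      dotProduct_mulVec_self_eq_zero hpow, neg_zero]

end SkewSymmetric

theorem dotProduct_eq_zero_of_mem_span {ι R : Type*} [Fintype ι] [CommSemiring R]
    {s t : Set (ι → R)} (hst : ∀ u ∈ s, ∀ w ∈ t, u ⬝ᵥ w = 0) {u w : ι → R}
    (hu : u ∈ Submodule.span R s) (hw : w ∈ Submodule.span R t) : u ⬝ᵥ w = 0 := by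
  induction hu, hw using Submodule.span_induction₂ with
  | mem_mem u w hu hw => exact hst u hu w hw
  | zero_left => exact zero_dotProduct _
  | zero_right => exact dotProduct_zero _
  | add_left _ _ _ _ _ _ h₁ h₂ => rw [add_dotProduct, h₁, h₂, add_zero]
  | add_right _ _ _ _ _ _ h₁ h₂ => rw [dotProduct_add, h₁, h₂, add_zero]
  | smul_left _ _ _ _ _ h => rw [smul_dotProduct, h, smul_zero]
  | smul_right _ _ _ _ _ h => rw [dotProduct_smul, h, smul_zero]

section Krylov

variable {n : ℕ} {M : Matrix (Fin n) (Fin n) ℝ} {v : Fin n → ℝ} {m : ℕ}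

theorem self_mem_krylov : v ∈ krylov M v (m + 1) :=
  Submodule.subset_span ⟨0, Nat.succ_pos m, one_mulVec v⟩

theorem krylov_map_mulVecLin {N : Matrix (Fin n) (Fin n) ℝ} (h : Commute N M) :
    (krylov M v m).map N.mulVecLin = krylov M (N *ᵥ v) m := by
  simp_rw [krylov, Submodule.map_span, Set.image_image, mulVecLin_apply, mulVec_mulVec,
    fun k => (h.pow_right k).eq]

theorem krylov_mulVec_self_le : krylov M (M *ᵥ v) m ≤ krylov M v (m + 1) := by
  rw [krylov, Submodule.span_le]
  rintro _ ⟨k, hk, rfl⟩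
  exact Submodule.subset_span
    ⟨k + 1, Nat.succ_lt_succ hk, by dsimp only; rw [mulVec_mulVec, ← pow_succ]⟩

theorem dotProduct_eq_zero_of_mem_krylov {A : Matrix (Fin n) (Fin n) ℝ} (hA : Aᵀ = -A)
    {b p r : Fin n → ℝ} {s t : ℕ} (hp : p ∈ krylov (A ^ 2) (A *ᵥ b) s)
    (hr : r ∈ krylov (A ^ 2) b t) : p ⬝ᵥ r = 0 := by
  refine dotProduct_eq_zero_of_mem_span ?_ hp hr
  rintro _ ⟨k, -, rfl⟩ _ ⟨j, -, rfl⟩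
  dsimp only
  rw [mulVec_mulVec, ← pow_mul, ← pow_succ, ← pow_mul]
  exact pow_mulVec_dotProduct_pow_mulVec_eq_zero hA ⟨k + j, by ring⟩ b

end Krylov

theorem cgne_residual_in_even_krylov {n : ℕ} (A : Matrix (Fin n) (Fin n) ℝ)
    (hA : Aᵀ = -A) (b xE : Fin n → ℝ) (q : ℕ)
    (hxE : xE ∈ krylov (A ^ 2) (A *ᵥ b) q) :
    (b - A *ᵥ xE) ∈ krylov (A ^ 2) b (q + 1) ∧
      ∀ p ∈ krylov (A ^ 2) (A *ᵥ b) q, p ⬝ᵥ (b - A *ᵥ xE) = 0 := by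
  have hAxE : A *ᵥ xE ∈ krylov (A ^ 2) ((A ^ 2) *ᵥ b) q := by
    rw [sq, ← mulVec_mulVec, ← sq, ← krylov_map_mulVecLin (Commute.self_pow A 2)]
    exact Submodule.mem_map_of_mem hxE
  have hres : b - A *ᵥ xE ∈ krylov (A ^ 2) b (q + 1) :=
    Submodule.sub_mem _ self_mem_krylov (krylov_mulVec_self_le hAxE)
  exact ⟨hres, fun p hp => dotProduct_eq_zero_of_mem_krylov hA hp hres⟩
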